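/- Let φ be a flow on a compact metric space X. If φ is expansive on X \ Sing(φ), then Sing(φ) is dynamically isolated. -/

import Mathlib

open Set Metric Filter
open scoped Classical

variable {X : Type*}

/-- A (continuous) flow on a topological space, given as a map `φ : ℝ → X → X`. -/
def IsFlowMap [TopologicalSpace X] (φ : ℝ → X → X) : Prop :=
  Continuous (fun p : ℝ × X => φ p.1 p.2) ∧ (∀ x : X, φ 0 x = x) ∧
    ∀ t s : ℝ, ∀ x : X, φ (t + s) x = φ t (φ s x)

/-- The singular set of a flow. -/
def SingSet (φ : ℝ → X → X) : Set X := {x : X | ∀ t : ℝ, φ t x = x}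

/-- An increasing homeomorphism of `ℝ`: a strictly increasing continuous bijection. -/
def IncreasingHomeo (s : ℝ → ℝ) : Prop :=
  Continuous s ∧ StrictMono s ∧ Function.Bijective s

/-- Distance from a point to a set, with the convention that the distance
to the empty set is the diameter of the whole space. -/
noncomputable def distToSet [MetricSpace X] (z : X) (A : Set X) : ℝ :=
  if A = ∅ then Metric.diam (Set.univ : Set X) else Metric.infDist z A

/-- The orbit of a point under a flow. -/
def flowOrbit (φ : ℝ → X → X) (x : X) : Set X := Set.range fun t : ℝ => φ t x

/-- Bowen–Walters expansivity of a flow on a subset `Λ`. -/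
def ExpansiveOn [MetricSpace X] (φ : ℝ → X → X) (Λ : Set X) : Prop :=
  ∀ ε > (0:ℝ), ∃ δ > (0:ℝ), ∀ x ∈ Λ, ∀ y ∈ Λ, ∀ s : ℝ → ℝ, Continuous s → s 0 = 0 →
    (∀ t : ℝ, dist (φ t x) (φ (s t) y) ≤ δ) →
    ∃ τ ∈ Set.Icc (-ε) ε, y = φ τ x

/-- Komuro k*-expansivity of a flow on a subset `Λ`. -/
def KStarExpansiveOn [MetricSpace X] (φ : ℝ → X → X) (Λ : Set X) : Prop :=
  ∀ ε > (0:ℝ), ∃ δ > (0:ℝ), ∀ x ∈ Λ, ∀ y ∈ Λ, ∀ s : ℝ → ℝ,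
    IncreasingHomeo s → s 0 = 0 →
    (∀ t : ℝ, dist (φ t x) (φ (s t) y) ≤ δ) →
    ∃ t₀ : ℝ, ∃ τ ∈ Set.Icc (t₀ - ε) (t₀ + ε), φ (s t₀) y = φ τ x

/-- Singular expansivity of a flow on a subset `Λ`. -/
def SingularExpansiveOn [MetricSpace X] (φ : ℝ → X → X) (Λ : Set X) : Prop :=
  ∀ ε > (0:ℝ), ∃ δ > (0:ℝ), ∀ x ∈ Λ, ∀ y ∈ Λ, ∀ s : ℝ → ℝ, IncreasingHomeo s →
    (∀ t : ℝ, dist (φ t x) (φ (s t) y) ≤ δ * distToSet (φ t x) (SingSet φ)) →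
    ∃ t₀ : ℝ, ∃ τ ∈ Set.Icc (t₀ - ε) (t₀ + ε), φ (s t₀) y = φ τ x

/-- A periodic point of a flow: a nonsingular point with a positive period. -/
def IsPeriodicPoint (φ : ℝ → X → X) (x : X) : Prop :=
  x ∉ SingSet φ ∧ ∃ t : ℝ, 0 < t ∧ φ t x = x

/-- An invariant set `K` is dynamically isolated if it has a neighborhood `U`
with `K = ⋂_{t ∈ ℝ} φ_t(U)`. -/
def DynIsolated [TopologicalSpace X] (φ : ℝ → X → X) (K : Set X) : Prop :=
  ∃ U : Set X, K ⊆ interior U ∧ K = ⋂ t : ℝ, φ t '' U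

/-- Equicontinuity of a flow. -/
def EquicontinuousFlow [MetricSpace X] (φ : ℝ → X → X) : Prop :=
  ∀ ε > (0:ℝ), ∃ δ > (0:ℝ), ∀ x y : X, dist x y ≤ δ →
    ∀ t : ℝ, dist (φ t x) (φ t y) ≤ ε

/-- Singular equicontinuity of a flow. -/
def SingularEquicontinuous [MetricSpace X] (φ : ℝ → X → X) : Prop :=
  ∀ ε > (0:ℝ), ∃ δ > (0:ℝ), ∀ x y : X, dist x y ≤ δ * distToSet x (SingSet φ) →
    ∀ t : ℝ, dist (φ t x) (φ t y) ≤ ε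

/-!
Fix δ > 0 such that any two regular points whose orbits stay δ-close (without reparametrisation)
lie on a common orbit, at time distance at most 1. Near `Sing(φ)` points move less than δ/4
during times in `[0, 3]`. Hence a regular point `x` whose whole orbit stays near `Sing(φ)` is
δ-shadowed by `φ₂ x`, so it is periodic with period in `[1, 3]` and its orbit stays within δ/4
of `x`; two such points at distance < δ/2 then lie on one orbit. Covering `X` by finitely many
balls of radius δ/4, each ball meets at most one such orbit, and each of these finitely many
orbits avoids some neighbourhood of the closed set `Sing(φ)`. So for small `r` no regular orbit
stays in the `r`-thickening of `Sing(φ)`, and this thickening isolates `Sing(φ)`.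
-/

open scoped Topology

theorem IsCompact.eventually_forall_mem_of_forall_exists_nhds [TopologicalSpace X] {ι : Type*}
    {l : Filter ι} {K : Set X} (hK : IsCompact K) {P : ι → X → Prop}
    (h : ∀ z ∈ K, ∃ U ∈ 𝓝 z, ∀ᶠ i in l, ∀ x ∈ U, P i x) : ∀ᶠ i in l, ∀ x ∈ K, P i x := by
  refine hK.induction_on (p := fun s => ∀ᶠ i in l, ∀ x ∈ s, P i x) (by simp)
    (fun s t hst ht => ht.mono fun i hi x hx => hi x (hst hx)) (fun s t hs ht => ?_)
    fun z hz => ?_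
  · filter_upwards [hs, ht] with i hs ht x hx
    exact hx.elim (hs x) (ht x)
  · obtain ⟨U, hU, hUP⟩ := h z hz
    exact ⟨U, mem_nhdsWithin_of_mem_nhds hU, hUP⟩

theorem mapsTo_singSet {φ : ℝ → X → X} (t : ℝ) : MapsTo (φ t) (SingSet φ) (SingSet φ) :=
  fun _ hx => (hx t).symm ▸ hx

namespace IsFlowMap

section Topological

variable [TopologicalSpace X] {φ : ℝ → X → X} (hφ : IsFlowMap φ)
include hφ

theorem continuous_uncurry : Continuous (fun p : ℝ × X => φ p.1 p.2) := hφ.1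

theorem apply_zero (x : X) : φ 0 x = x := hφ.2.1 x

theorem apply_add (t s : ℝ) (x : X) : φ (t + s) x = φ t (φ s x) := hφ.2.2 t s x

theorem continuous_apply (t : ℝ) : Continuous (φ t) :=
  hφ.continuous_uncurry.comp (continuous_const.prodMk continuous_id)

theorem apply_comm (t s : ℝ) (x : X) : φ t (φ s x) = φ s (φ t x) := by
  rw [← hφ.apply_add, ← hφ.apply_add, add_comm]

theorem neg_apply_apply (t : ℝ) (x : X) : φ (-t) (φ t x) = x := by
  rw [← hφ.apply_add, neg_add_cancel, hφ.apply_zero]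

theorem apply_neg_apply (t : ℝ) (x : X) : φ t (φ (-t) x) = x := by
  simpa using hφ.neg_apply_apply (-t) x

theorem periodic_apply {p : ℝ} {x : X} (hx : φ p x = x) : Function.Periodic (φ · x) p :=
  fun t => by simp only [hφ.apply_add, hx]

theorem isClosed_singSet [T2Space X] : IsClosed (SingSet φ) := by
  rw [SingSet, ofPred_forall]
  exact isClosed_iInter fun t => isClosed_eq (hφ.continuous_apply t) continuous_id

theorem apply_mem_singSet_iff {t : ℝ} {x : X} : φ t x ∈ SingSet φ ↔ x ∈ SingSet φ := by
  refine ⟨fun h s => ?_, fun h => (h t).symm ▸ h⟩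
  have hx : φ t x = x := by rw [← h (-t), hφ.neg_apply_apply]
  rw [← hx]
  exact h s

theorem mapsTo_compl_singSet (t : ℝ) : MapsTo (φ t) (SingSet φ)ᶜ (SingSet φ)ᶜ :=
  fun _ hx => mt hφ.apply_mem_singSet_iff.1 hx

theorem mem_iInter_image_iff {U : Set X} {x : X} :
    x ∈ ⋂ t, φ t '' U ↔ ∀ t, φ t x ∈ U := by
  simp only [mem_iInter, mem_image]
  refine ⟨fun h t => ?_, fun h t => ⟨φ (-t) x, h (-t), hφ.apply_neg_apply t x⟩⟩
  obtain ⟨w, hw, rfl⟩ := h (-t)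
  rwa [hφ.apply_neg_apply]

theorem dynIsolated_of_forall_apply_mem {K U : Set X} (hK : ∀ t, MapsTo (φ t) K K)
    (hKU : K ⊆ interior U) (h : ∀ x, (∀ t, φ t x ∈ U) → x ∈ K) : DynIsolated φ K :=
  ⟨U, hKU, Subset.antisymm
    (fun _ hx => hφ.mem_iInter_image_iff.2 fun t => interior_subset (hKU (hK t hx)))
    (fun x hx => h x (hφ.mem_iInter_image_iff.1 hx))⟩

end Topological

theorem eventually_nhdsSet_forall_dist_apply_lt [MetricSpace X] {φ : ℝ → X → X}
    (hφ : IsFlowMap φ) {K : Set ℝ} (hK : IsCompact K) {c : ℝ} (hc : 0 < c) :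
    ∀ᶠ z in 𝓝ˢ (SingSet φ), ∀ u ∈ K, dist (φ u z) z < c := by
  refine eventually_nhdsSet_iff_forall.2 fun z hz =>
    hK.eventually_forall_of_forall_eventually fun u _ => ?_
  have hcont : Continuous fun p : X × ℝ => dist (φ p.2 p.1) p.1 :=
    (hφ.continuous_uncurry.comp continuous_swap).dist continuous_fst
  exact hcont.continuousAt.eventually_lt continuousAt_const (by simpa [hz u] using hc)

end IsFlowMap

section Expansive

variable [MetricSpace X] {φ : ℝ → X → X} {Λ : Set X} {ε δ : ℝ}

def IsExpansivityConstant (φ : ℝ → X → X) (Λ : Set X) (ε δ : ℝ) : Prop :=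
  ∀ x ∈ Λ, ∀ y ∈ Λ, (∀ t, dist (φ t x) (φ t y) ≤ δ) → ∃ τ ∈ Icc (-ε) ε, y = φ τ x

theorem ExpansiveOn.exists_isExpansivityConstant (h : ExpansiveOn φ Λ) (hε : 0 < ε) :
    ∃ δ > 0, IsExpansivityConstant φ Λ ε δ := by
  obtain ⟨δ, hδ, H⟩ := h ε hε
  exact ⟨δ, hδ, fun x hx y hy hxy => H x hx y hy id continuous_id rfl hxy⟩

namespace IsExpansivityConstant

section

variable (h : IsExpansivityConstant φ Λ ε δ)
include h

theorem exists_eq_apply_of_dist_lt {x y : X} (hx : x ∈ Λ) (hy : y ∈ Λ)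
    (hxt : ∀ t, dist (φ t x) x < δ / 4) (hyt : ∀ t, dist (φ t y) y < δ / 4)
    (hxy : dist x y < δ / 2) : ∃ τ ∈ Icc (-ε) ε, y = φ τ x :=
  h x hx y hy fun t => by
    calc dist (φ t x) (φ t y) ≤ dist (φ t x) x + dist x y + dist (φ t y) y := by
          simpa only [dist_comm y] using dist_triangle4 (φ t x) x y (φ t y)
      _ ≤ δ := by linarith [hxt t, hyt t]

theorem exists_apply_sub_eq_self (hφ : IsFlowMap φ) {x : X} {T : ℝ} (hx : x ∈ Λ)
    (hTx : φ T x ∈ Λ) (hslow : ∀ t, dist (φ T (φ t x)) (φ t x) ≤ δ) :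
    ∃ τ ∈ Icc (-ε) ε, φ (T - τ) x = x := by
  obtain ⟨τ, hτ, hT⟩ := h x hx (φ T x) hTx fun t => by
    rw [dist_comm, hφ.apply_comm]
    exact hslow t
  exact ⟨τ, hτ, by rw [sub_eq_neg_add, hφ.apply_add, hT, hφ.neg_apply_apply]⟩

theorem dist_apply_lt_of_forall_apply_mem (hφ : IsFlowMap φ) (hΛ : ∀ t, MapsTo (φ t) Λ Λ)
    {V : Set X} {T c : ℝ} (hε : 0 ≤ ε) (hεT : ε < T) (hcδ : c ≤ δ)
    (hV : ∀ z ∈ V, ∀ u ∈ Icc 0 (T + ε), dist (φ u z) z < c) {x : X} (hx : x ∈ Λ)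
    (hxV : ∀ t, φ t x ∈ V) (t : ℝ) : dist (φ t x) x < c := by
  have hxV₀ : x ∈ V := by simpa only [hφ.apply_zero] using hxV 0
  obtain ⟨τ, hτ, hper⟩ := h.exists_apply_sub_eq_self hφ (T := T) hx (hΛ T hx) fun t =>
    (hV _ (hxV t) T ⟨by linarith, by linarith⟩).le.trans hcδ
  obtain ⟨u, hu, htu⟩ := (hφ.periodic_apply hper).exists_mem_Ico₀ (by linarith [hτ.2]) t
  rw [htu]
  exact hV x hxV₀ u ⟨hu.1, by linarith [hu.2, hτ.1]⟩

end

theorem eventually_forall_mem_ball_of_forall_apply_mem_thickening {S : Set X} {r₀ : ℝ}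
    (h : IsExpansivityConstant φ Sᶜ ε δ) (hS : IsClosed S) (hr₀ : 0 < r₀)
    (hslow : ∀ x ∉ S, (∀ t, φ t x ∈ thickening r₀ S) → ∀ t, dist (φ t x) x < δ / 4) (z : X) :
    ∀ᶠ r in 𝓝[>] 0, ∀ x ∈ ball z (δ / 4), (∀ t, φ t x ∈ thickening r S) → x ∈ S := by
  by_cases hW : ∃ y ∈ ball z (δ / 4), y ∉ S ∧ ∀ t, φ t y ∈ thickening r₀ S
  · obtain ⟨y, hyz, hyS, hyr₀⟩ := hW
    obtain ⟨ρ, hρ, hyρ⟩ : ∃ ρ > 0, y ∉ thickening ρ S := by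
      rw [← hS.closure_eq, closure_eq_iInter_thickening] at hyS
      simpa only [mem_iInter, not_forall, exists_prop] using hyS
    filter_upwards [Ioo_mem_nhdsGT (lt_min hr₀ hρ)] with r hr x hxz hxr
    by_contra hxS
    have hxr₀ t : φ t x ∈ thickening r₀ S :=
      thickening_mono (hr.2.le.trans (min_le_left _ _)) _ (hxr t)
    have hxy : dist x y < δ / 2 := by
      linarith [dist_triangle_right x y z, mem_ball.1 hxz, mem_ball.1 hyz]
    obtain ⟨τ, -, rfl⟩ :=
      h.exists_eq_apply_of_dist_lt hxS hyS (hslow x hxS hxr₀) (hslow y hyS hyr₀) hxy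
    exact hyρ (thickening_mono (hr.2.le.trans (min_le_right _ _)) _ (hxr τ))
  · filter_upwards [Ioo_mem_nhdsGT hr₀] with r hr x hxz hxr
    by_contra hxS
    exact hW ⟨x, hxz, hxS, fun t => thickening_mono hr.2.le _ (hxr t)⟩

end IsExpansivityConstant

end Expansive

theorem ExpansiveOn.exists_forall_apply_mem_thickening_singSet [MetricSpace X] [CompactSpace X]
    {φ : ℝ → X → X} (hφ : IsFlowMap φ) (h : ExpansiveOn φ (SingSet φ)ᶜ) :
    ∃ r > 0, ∀ x, (∀ t, φ t x ∈ thickening r (SingSet φ)) → x ∈ SingSet φ := by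
  obtain ⟨δ, hδ, hexp⟩ := h.exists_isExpansivityConstant one_pos
  obtain ⟨r₀, hr₀, hV⟩ :=
    (hasBasis_nhdsSet_thickening hφ.isClosed_singSet.isCompact).eventually_iff.1 <|
      hφ.eventually_nhdsSet_forall_dist_apply_lt (isCompact_Icc (a := 0) (b := 2 + 1))
        (c := δ / 4) (by positivity)
  have hslow x (hx : x ∉ SingSet φ) (hxr : ∀ t, φ t x ∈ thickening r₀ (SingSet φ)) t :=
    hexp.dist_apply_lt_of_forall_apply_mem hφ hφ.mapsTo_compl_singSet zero_le_one one_lt_two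
      (by linarith) hV hx hxr t
  have hlocal z : ∃ U ∈ 𝓝 z, ∀ᶠ r in 𝓝[>] (0 : ℝ), ∀ x ∈ U,
      (∀ t, φ t x ∈ thickening r (SingSet φ)) → x ∈ SingSet φ :=
    ⟨ball z (δ / 4), ball_mem_nhds z (by positivity),
      hexp.eventually_forall_mem_ball_of_forall_apply_mem_thickening hφ.isClosed_singSet hr₀
        hslow z⟩
  obtain ⟨r, hr, hr_pos⟩ := ((isCompact_univ.eventually_forall_mem_of_forall_exists_nhds
    fun z _ => hlocal z).and self_mem_nhdsWithin).exists
  exact ⟨r, hr_pos, fun x => hr x trivial⟩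

theorem expansive_off_sing_implies_dyn_isolated
    [MetricSpace X] [CompactSpace X] (φ : ℝ → X → X) (hφ : IsFlowMap φ)
    (h : ExpansiveOn φ (SingSet φ)ᶜ) : DynIsolated φ (SingSet φ) := by
  obtain ⟨r, hr, hiso⟩ := h.exists_forall_apply_mem_thickening_singSet hφ
  exact hφ.dynIsolated_of_forall_apply_mem mapsTo_singSet
    ((self_subset_thickening hr _).trans_eq isOpen_thickening.interior_eq.symm) hiso
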